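/- (Basic inequality, from the proof of Theorem 3.1.) Under the Dantzig-selector hypotheses, with h := θ₀ − θ̂, one has hᵀ V(θ₀) h ≤ (4/ν) γ ‖h‖₁ ≤ (8/ν) γ ‖θ₀‖₁. -/

import Mathlib

open Finset

/-- ℓ₁ norm on `Fin p → ℝ`. -/
noncomputable def l1 {p : ℕ} (v : Fin p → ℝ) : ℝ := ∑ i, |v i|

/-- ℓ₁ norm of the subvector indexed by `T`. -/
noncomputable def l1on {p : ℕ} (T : Finset (Fin p)) (v : Fin p → ℝ) : ℝ := ∑ i ∈ T, |v i|

/-- ℓ₂ norm on `Fin p → ℝ`. -/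
noncomputable def l2 {p : ℕ} (v : Fin p → ℝ) : ℝ := Real.sqrt (∑ i, (v i) ^ 2)

/-- ℓ_∞ norm on `Fin p → ℝ`. -/
noncomputable def linf {p : ℕ} (v : Fin p → ℝ) : ℝ := ⨆ i, |v i|

/-- ℓ_q norm on `Fin p → ℝ` for real `q ≥ 1`. -/
noncomputable def lqnorm {p : ℕ} (q : ℝ) (v : Fin p → ℝ) : ℝ := (∑ i, |v i| ^ q) ^ (1 / q)

/-- Quadratic form `hᵀ J h`. -/
noncomputable def quadForm {p : ℕ} (J : Matrix (Fin p) (Fin p) ℝ) (h : Fin p → ℝ) : ℝ :=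
  ∑ i, ∑ j, h i * J i j * h j

/-- The cone `C_T = {h : ‖h_{Tᶜ}‖₁ ≤ ‖h_T‖₁}`. -/
def cone {p : ℕ} (T : Finset (Fin p)) : Set (Fin p → ℝ) := {h | l1on Tᶜ h ≤ l1on T h}

/-- Compatibility factor `κ(T; J)`. -/
noncomputable def kappa {p : ℕ} (T : Finset (Fin p)) (J : Matrix (Fin p) (Fin p) ℝ) : ℝ :=
  sInf {r | ∃ h : Fin p → ℝ, h ≠ 0 ∧ h ∈ cone T ∧
    r = Real.sqrt T.card * Real.sqrt (quadForm J h) / l1on T h}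

/-- Restricted eigenvalue `RE(T; J)`. -/
noncomputable def RE {p : ℕ} (T : Finset (Fin p)) (J : Matrix (Fin p) (Fin p) ℝ) : ℝ :=
  sInf {r | ∃ h : Fin p → ℝ, h ≠ 0 ∧ h ∈ cone T ∧
    r = Real.sqrt (quadForm J h) / l2 h}

/-- Weak cone invertibility factor at `q = ∞`, `F_∞(T; J)`. -/
noncomputable def Finf {p : ℕ} (T : Finset (Fin p)) (J : Matrix (Fin p) (Fin p) ℝ) : ℝ :=
  sInf {r | ∃ h : Fin p → ℝ, h ≠ 0 ∧ h ∈ cone T ∧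
    r = Real.sqrt (quadForm J h) / linf h}

/-- Weak cone invertibility factor `F_q(T; J)` for `q ∈ [1,∞)`
(with the quadratic form without square root, as in the paper's proofs). -/
noncomputable def Fq {p : ℕ} (q : ℝ) (T : Finset (Fin p)) (J : Matrix (Fin p) (Fin p) ℝ) : ℝ :=
  sInf {r | ∃ h : Fin p → ℝ, h ≠ 0 ∧ h ∈ cone T ∧
    r = (T.card : ℝ) ^ (1 / q) * quadForm J h / (l1on T h * lqnorm q h)}

/-- `g(x) = (e^{2x} - 1)/x` for `x ≠ 0`, `g(0) = 2`. -/
noncomputable def g (x : ℝ) : ℝ := if x = 0 then 2 else (Real.exp (2 * x) - 1) / x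

/-- Gradient of the log-quasi-likelihood (divided by `n`), with `b = 0`, `Δ = 1/n`:
`ψ(θ)_i = (1/(nΔ)) Σ_k z_{k,i}(e^{-2⟨θ,z_k⟩}(x_k - x_{k-1})² - Δ)`. -/
noncomputable def psiD {n p : ℕ} (x : Fin (n + 1) → ℝ) (z : Fin n → Fin p → ℝ)
    (θ : Fin p → ℝ) (i : Fin p) : ℝ :=
  (1 / ((n : ℝ) * (1 / n))) * ∑ k, z k i *
    (Real.exp (-2 * ∑ j, θ j * z k j) * (x k.succ - x k.castSucc) ^ 2 - 1 / n)

/-- Negative Hessian (divided by `n`):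
`V(θ) = (2/(nΔ)) Σ_k e^{-2⟨θ,z_k⟩}(x_k - x_{k-1})² z_k z_kᵀ`. -/
noncomputable def VD {n p : ℕ} (x : Fin (n + 1) → ℝ) (z : Fin n → Fin p → ℝ)
    (θ : Fin p → ℝ) : Matrix (Fin p) (Fin p) ℝ := fun i j =>
  (2 / ((n : ℝ) * (1 / n))) * ∑ k, Real.exp (-2 * ∑ l, θ l * z k l) *
    (x k.succ - x k.castSucc) ^ 2 * z k i * z k j

/-- `J = (2/n) Σ_k z_k z_kᵀ`. -/
noncomputable def JD {n p : ℕ} (z : Fin n → Fin p → ℝ) : Matrix (Fin p) (Fin p) ℝ :=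
  fun i j => (2 / (n : ℝ)) * ∑ k, z k i * z k j

/-- `ε = max_{i,j} |(V(θ) - J)_{ij}|`. -/
noncomputable def epsD {n p : ℕ} (x : Fin (n + 1) → ℝ) (z : Fin n → Fin p → ℝ)
    (θ : Fin p → ℝ) : ℝ :=
  ⨆ i, ⨆ j, |VD x z θ i j - JD z i j|

/-! Writing `h := θ₀ - θ̂` and `u_k := ⟨h, z_k⟩`, one has
`e^{-2⟨θ̂, z_k⟩} = e^{-2⟨θ₀, z_k⟩} e^{2 u_k}`, so, up to the common factor `1/(nΔ) ≥ 0`, the pairing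
`⟨h, ψ(θ̂) - ψ(θ₀)⟩` equals `Σ_k e^{-2⟨θ₀, z_k⟩} (x_k - x_{k-1})² u_k (e^{2u_k} - 1)` and the quadratic
form `hᵀ V(θ₀) h` equals `2 Σ_k e^{-2⟨θ₀, z_k⟩} (x_k - x_{k-1})² u_k²`. Since `u_k (e^{2u_k} - 1) = g(u_k) u_k²` and
`|u_k| ≤ C ‖h‖₁ ≤ 2 C ‖θ₀‖₁`, the pairing is at least `(ν/2) hᵀ V(θ₀) h`; by Hölder and the two
Dantzig constraints it is at most `2 γ ‖h‖₁`. -/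

open Matrix

lemma g_pos (t : ℝ) : 0 < g t := by
  unfold g
  split_ifs with ht
  · norm_num
  rcases lt_or_gt_of_ne ht with hneg | hpos
  · exact div_pos_of_neg_of_neg (by simpa using Real.exp_lt_one_iff.mpr (by linarith)) hneg
  · exact div_pos (by simpa using Real.one_lt_exp_iff.mpr (by linarith)) hpos

lemma g_mul_sq (t : ℝ) : g t * t ^ 2 = t * (Real.exp (2 * t) - 1) := by
  unfold g
  split_ifs with ht
  · simp [ht]
  · field_simp

lemma l1_sub_le {p : ℕ} (a b : Fin p → ℝ) : l1 (a - b) ≤ l1 a + l1 b := by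
  unfold l1
  rw [← sum_add_distrib]
  exact sum_le_sum fun i _ => abs_sub _ _

lemma abs_dotProduct_le_mul_l1 {p : ℕ} {C : ℝ} {w : Fin p → ℝ} (hw : ∀ i, |w i| ≤ C)
    (v : Fin p → ℝ) : |v ⬝ᵥ w| ≤ C * l1 v := by
  calc |v ⬝ᵥ w| ≤ ∑ i, |v i| * |w i| := by
        rw [dotProduct]
        simpa only [abs_mul] using abs_sum_le_sum_abs (fun i => v i * w i) univ
    _ ≤ ∑ i, |v i| * C := sum_le_sum fun i _ => mul_le_mul_of_nonneg_left (hw i) (abs_nonneg _)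
    _ = C * l1 v := by rw [← sum_mul, mul_comm, l1]

lemma abs_le_linf {p : ℕ} (v : Fin p → ℝ) (i : Fin p) : |v i| ≤ linf v :=
  le_ciSup (f := fun j => |v j|) (Set.finite_range _).bddAbove i

lemma abs_dotProduct_le_of_linf_le {p : ℕ} {γ : ℝ} {w : Fin p → ℝ} (hw : linf w ≤ γ)
    (v : Fin p → ℝ) : |v ⬝ᵥ w| ≤ γ * l1 v :=
  abs_dotProduct_le_mul_l1 (fun i => (abs_le_linf w i).trans hw) v

lemma quadForm_const_mul_sum_rankOne {n p : ℕ} (c : ℝ) (a : Fin n → ℝ) (w : Fin n → Fin p → ℝ)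
    (h : Fin p → ℝ) :
    quadForm (fun i j => c * ∑ k, a k * w k i * w k j) h = c * ∑ k, a k * (h ⬝ᵥ w k) ^ 2 := by
  simp only [quadForm, sq, dotProduct, mul_sum, sum_mul]
  refine .trans ?_ ((sum_congr rfl fun _ _ => sum_comm).trans sum_comm)
  exact sum_congr rfl fun i _ => sum_congr rfl fun j _ => sum_congr rfl fun k _ => by ring

lemma dotProduct_const_mul_sum {n p : ℕ} (c : ℝ) (w : Fin n → Fin p → ℝ) (b : Fin n → ℝ)
    (h : Fin p → ℝ) :
    h ⬝ᵥ (fun i => c * ∑ k, w k i * b k) = c * ∑ k, h ⬝ᵥ w k * b k := by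
  simp only [dotProduct, mul_sum, sum_mul]
  rw [sum_comm]
  exact sum_congr rfl fun k _ => sum_congr rfl fun i _ => by ring

section QuasiLikelihood

variable {n p : ℕ} (x : Fin (n + 1) → ℝ) (z : Fin n → Fin p → ℝ)

lemma quadForm_VD (θ h : Fin p → ℝ) :
    quadForm (VD x z θ) h = 2 / ((n : ℝ) * (1 / n)) * ∑ k,
      Real.exp (-2 * θ ⬝ᵥ z k) * (x k.succ - x k.castSucc) ^ 2 * (h ⬝ᵥ z k) ^ 2 :=
  quadForm_const_mul_sum_rankOne _ _ z h

lemma dotProduct_psiD (θ h : Fin p → ℝ) :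
    h ⬝ᵥ psiD x z θ = 1 / ((n : ℝ) * (1 / n)) * ∑ k,
      h ⬝ᵥ z k * (Real.exp (-2 * θ ⬝ᵥ z k) * (x k.succ - x k.castSucc) ^ 2 - 1 / n) :=
  dotProduct_const_mul_sum _ z _ h

lemma dotProduct_psiD_sub_psiD (θ θ' : Fin p → ℝ) :
    (θ - θ') ⬝ᵥ (psiD x z θ' - psiD x z θ) = 1 / ((n : ℝ) * (1 / n)) * ∑ k,
      Real.exp (-2 * θ ⬝ᵥ z k) * (x k.succ - x k.castSucc) ^ 2 *
        ((θ - θ') ⬝ᵥ z k * (Real.exp (2 * (θ - θ') ⬝ᵥ z k) - 1)) := by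
  rw [dotProduct_sub, dotProduct_psiD, dotProduct_psiD, ← mul_sub, ← sum_sub_distrib]
  congr 1
  refine sum_congr rfl fun k _ => ?_
  have hexp : Real.exp (-2 * θ' ⬝ᵥ z k) =
      Real.exp (-2 * θ ⬝ᵥ z k) * Real.exp (2 * (θ - θ') ⬝ᵥ z k) := by
    rw [← Real.exp_add, sub_dotProduct]
    ring_nf
  rw [hexp]
  ring

lemma half_mul_quadForm_VD_le {ν : ℝ} {θ θ' : Fin p → ℝ}
    (hν : ∀ k, ν ≤ g ((θ - θ') ⬝ᵥ z k)) :
    ν / 2 * quadForm (VD x z θ) (θ - θ') ≤ (θ - θ') ⬝ᵥ (psiD x z θ' - psiD x z θ) := by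
  simp only [quadForm_VD, dotProduct_psiD_sub_psiD, mul_sum]
  refine sum_le_sum fun k _ => ?_
  rw [← g_mul_sq]
  calc ν / 2 * (2 / ((n : ℝ) * (1 / n)) * (Real.exp (-2 * θ ⬝ᵥ z k) *
          (x k.succ - x k.castSucc) ^ 2 * ((θ - θ') ⬝ᵥ z k) ^ 2))
        = 1 / ((n : ℝ) * (1 / n)) * (Real.exp (-2 * θ ⬝ᵥ z k) *
          (x k.succ - x k.castSucc) ^ 2 * (ν * ((θ - θ') ⬝ᵥ z k) ^ 2)) := by ring
    _ ≤ _ := by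
      refine mul_le_mul_of_nonneg_left (mul_le_mul_of_nonneg_left ?_ (by positivity)) (by positivity)
      exact mul_le_mul_of_nonneg_right (hν k) (sq_nonneg _)

end QuasiLikelihood

theorem basic_inequality_general
    (n p : ℕ)
    (C : ℝ) (hC : 0 < C)
    (x : Fin (n + 1) → ℝ) (z : Fin n → Fin p → ℝ)
    (hz : ∀ k i, |z k i| ≤ C)
    (θ₀ θhat : Fin p → ℝ)
    (ν : ℝ) (hν : IsLeast (g '' Set.Icc (-(2 * C * l1 θ₀)) (2 * C * l1 θ₀)) ν)
    (γ : ℝ) (hγ : 0 < γ)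
    (hfeas : linf (psiD x z θhat) ≤ γ)
    (hmin : l1 θhat ≤ l1 θ₀)
    (htrue : linf (psiD x z θ₀) ≤ γ) :
    quadForm (VD x z θ₀) (θ₀ - θhat) ≤ 4 / ν * γ * l1 (θ₀ - θhat) ∧
      4 / ν * γ * l1 (θ₀ - θhat) ≤ 8 / ν * γ * l1 θ₀ := by
  obtain ⟨⟨t, -, rfl⟩, hν_le⟩ := hν
  set h := θ₀ - θhat
  have hl1 : l1 h ≤ 2 * l1 θ₀ := by linarith [l1_sub_le θ₀ θhat]
  have hν_le_g (k : Fin n) : g t ≤ g (h ⬝ᵥ z k) := by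
    refine hν_le ⟨_, abs_le.mp ?_, rfl⟩
    calc |h ⬝ᵥ z k| ≤ C * l1 h := abs_dotProduct_le_mul_l1 (hz k) h
      _ ≤ 2 * C * l1 θ₀ := by linarith [mul_le_mul_of_nonneg_left hl1 hC.le]
  have hlower := half_mul_quadForm_VD_le x z hν_le_g
  have hupper : h ⬝ᵥ (psiD x z θhat - psiD x z θ₀) ≤ 2 * γ * l1 h := by
    rw [dotProduct_sub]
    linarith [(abs_le.mp (abs_dotProduct_le_of_linf_le hfeas h)).2,
      (abs_le.mp (abs_dotProduct_le_of_linf_le htrue h)).1]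
  have hgt_pos := g_pos t
  constructor
  · rw [div_mul_eq_mul_div, div_mul_eq_mul_div, le_div_iff₀ hgt_pos]
    linarith
  · calc 4 / g t * γ * l1 h ≤ 4 / g t * γ * (2 * l1 θ₀) :=
          mul_le_mul_of_nonneg_left hl1 (mul_pos (div_pos four_pos hgt_pos) hγ).le
      _ = 8 / g t * γ * l1 θ₀ := by ring

/-- Basic inequality (from the proof of Theorem 3.1): with `h := θ₀ - θ̂`,
`hᵀ V(θ₀) h ≤ (4/ν) γ ‖h‖₁ ≤ (8/ν) γ ‖θ₀‖₁`. -/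
theorem basic_inequality
    (n p : ℕ) (hn : 0 < n) (hp : 0 < p)
    (C : ℝ) (hC : 0 < C)
    (x : Fin (n + 1) → ℝ) (z : Fin n → Fin p → ℝ)
    (hz : ∀ k i, |z k i| ≤ C)
    (θ₀ θhat : Fin p → ℝ)
    (ν : ℝ) (hν : IsLeast (g '' Set.Icc (-(2 * C * l1 θ₀)) (2 * C * l1 θ₀)) ν)
    (γ : ℝ) (hγ : 0 < γ)
    (hfeas : linf (psiD x z θhat) ≤ γ)
    (hmin : l1 θhat ≤ l1 θ₀)
    (htrue : linf (psiD x z θ₀) ≤ γ) :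
    quadForm (VD x z θ₀) (θ₀ - θhat) ≤ 4 / ν * γ * l1 (θ₀ - θhat) ∧
      4 / ν * γ * l1 (θ₀ - θhat) ≤ 8 / ν * γ * l1 θ₀ :=
  basic_inequality_general n p C hC x z hz θ₀ θhat ν hν γ hγ hfeas hmin htrue
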